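/- Let X be a Banach space and let G₁, G₂ ∈ L(X) with ‖G₁‖ = ‖G₂‖ = 1. Suppose there exists a function φ : (0,1] → (0,1] with φ(t) → 1 as t → 1 such that for every x ∈ S_X and every t ∈ (0,1], ‖G₁x‖ ≥ t implies ‖G₂x‖ ≥ φ(t). Then ‖T‖_{G₁} ≤ ‖T‖_{G₂} for every T ∈ L(X). -/
import Mathlib


open Filter Topology

variable {𝕜 : Type*} [RCLike 𝕜]

/-- The `G`-norm of an operator `T`:
`‖T‖_G := inf_{δ>0} sup {‖Tx‖ : x ∈ S_X, ‖Gx‖ > 1 - δ}`. -/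
noncomputable def Gnorm {X : Type*} [NormedAddCommGroup X] [NormedSpace 𝕜 X]
    (G T : X →L[𝕜] X) : ℝ :=
  ⨅ δ : {δ : ℝ // 0 < δ},
    sSup {r : ℝ | ∃ x : X, ‖x‖ = 1 ∧ 1 - (δ : ℝ) < ‖G x‖ ∧ r = ‖T x‖}

/-- If `‖G‖ = 1` and `δ > 0`, there is a unit vector `x` with `‖G x‖ > 1 - δ`. -/
lemma exists_unit_big {X : Type*} [NormedAddCommGroup X] [NormedSpace 𝕜 X]
    (G : X →L[𝕜] X) (hG : ‖G‖ = 1) {δ : ℝ} (hδ : 0 < δ) :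
    ∃ x : X, ‖x‖ = 1 ∧ 1 - δ < ‖G x‖ := by
  have hr : max (1 - δ) 0 < ‖G‖ := by
    rw [hG]; exact max_lt (by linarith) one_pos
  obtain ⟨x, hx1, hx2⟩ := G.exists_lt_apply_of_lt_opNorm hr
  have hx0 : x ≠ 0 := by
    intro h
    rw [h, map_zero, norm_zero] at hx2
    exact absurd hx2 (not_lt.2 (le_max_right _ _))
  have hxn : 0 < ‖x‖ := norm_pos_iff.2 hx0
  refine ⟨((‖x‖⁻¹ : ℝ) : 𝕜) • x, ?_, ?_⟩
  · rw [norm_smul, RCLike.norm_ofReal, abs_of_nonneg (by positivity)]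
    field_simp
  · rw [map_smul, norm_smul, RCLike.norm_ofReal, abs_of_nonneg (by positivity)]
    have h1 : (1 : ℝ) ≤ ‖x‖⁻¹ := by
      rw [le_inv_comm₀ one_pos hxn]; simpa using hx1.le
    calc 1 - δ ≤ max (1 - δ) 0 := le_max_left _ _
      _ < ‖G x‖ := hx2
      _ = 1 * ‖G x‖ := (one_mul _).symm
      _ ≤ ‖x‖⁻¹ * ‖G x‖ := by
          apply mul_le_mul_of_nonneg_right h1 (norm_nonneg _)

/-- Let `G₁, G₂ ∈ L(X)` with `‖G₁‖ = ‖G₂‖ = 1`.  Suppose there is `φ : (0,1] → (0,1]`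
with `φ(t) → 1` as `t → 1` such that for every `x ∈ S_X` and `t ∈ (0,1]`,
`‖G₁x‖ ≥ t` implies `‖G₂x‖ ≥ φ(t)`.  Then `‖T‖_{G₁} ≤ ‖T‖_{G₂}` for all `T ∈ L(X)`. -/
theorem stmt_19 {X : Type*} [NormedAddCommGroup X] [NormedSpace 𝕜 X] [CompleteSpace X]
    (G₁ G₂ : X →L[𝕜] X) (hG₁ : ‖G₁‖ = 1) (hG₂ : ‖G₂‖ = 1)
    (φ : ℝ → ℝ) (hφmap : ∀ t ∈ Set.Ioc (0 : ℝ) 1, φ t ∈ Set.Ioc (0 : ℝ) 1)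
    (hφlim : Tendsto φ (nhdsWithin 1 (Set.Ioc (0 : ℝ) 1)) (nhds 1))
    (hφ : ∀ t ∈ Set.Ioc (0 : ℝ) 1, ∀ x : X, ‖x‖ = 1 → t ≤ ‖G₁ x‖ → φ t ≤ ‖G₂ x‖) :
    ∀ T : X →L[𝕜] X, Gnorm G₁ T ≤ Gnorm G₂ T := by
  intro T
  -- boundedness facts about the sup sets
  have hbdd : ∀ (G : X →L[𝕜] X) (δ : ℝ),
      BddAbove {r : ℝ | ∃ x : X, ‖x‖ = 1 ∧ 1 - δ < ‖G x‖ ∧ r = ‖T x‖} := by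
    intro G δ
    refine ⟨‖T‖, ?_⟩
    rintro r ⟨x, hx, -, rfl⟩
    calc ‖T x‖ ≤ ‖T‖ * ‖x‖ := T.le_opNorm x
      _ = ‖T‖ := by rw [hx, mul_one]
  have hne : ∀ (G : X →L[𝕜] X), ‖G‖ = 1 → ∀ δ : ℝ, 0 < δ →
      Set.Nonempty {r : ℝ | ∃ x : X, ‖x‖ = 1 ∧ 1 - δ < ‖G x‖ ∧ r = ‖T x‖} := by
    intro G hG δ hδ
    obtain ⟨x, hx1, hx2⟩ := exists_unit_big G hG hδ
    exact ⟨‖T x‖, x, hx1, hx2, rfl⟩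
  have hbelow : BddBelow (Set.range fun δ : {δ : ℝ // 0 < δ} =>
      sSup {r : ℝ | ∃ x : X, ‖x‖ = 1 ∧ 1 - (δ : ℝ) < ‖G₁ x‖ ∧ r = ‖T x‖}) := by
    refine ⟨0, ?_⟩
    rintro s ⟨⟨δ, hδ⟩, rfl⟩
    obtain ⟨r, x, hx1, hx2, rfl⟩ := hne G₁ hG₁ δ hδ
    exact le_trans (norm_nonneg _) (le_csSup (hbdd G₁ δ) ⟨x, hx1, hx2, rfl⟩)
  apply le_ciInf
  rintro ⟨δ', hδ'⟩
  -- find t ∈ (0,1) with φ t > 1 - δ'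
  have hlim' : Tendsto φ (nhdsWithin 1 (Set.Ioo (0 : ℝ) 1)) (nhds 1) :=
    hφlim.mono_left (nhdsWithin_mono _ Set.Ioo_subset_Ioc_self)
  have hev : ∀ᶠ t in nhdsWithin 1 (Set.Ioo (0 : ℝ) 1), 1 - δ' < φ t :=
    hlim' (Ioi_mem_nhds (by linarith))
  have hev2 : ∀ᶠ t in nhdsWithin 1 (Set.Ioo (0 : ℝ) 1), t ∈ Set.Ioo (0 : ℝ) 1 :=
    eventually_mem_nhdsWithin
  have : (nhdsWithin (1 : ℝ) (Set.Ioo (0 : ℝ) 1)).NeBot :=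
    right_nhdsWithin_Ioo_neBot zero_lt_one
  obtain ⟨t, ht1, ht2⟩ := (hev.and hev2).exists
  have ht0 : 0 < t := ht2.1
  have ht1' : t < 1 := ht2.2
  -- compare the two sups
  calc Gnorm G₁ T
      ≤ sSup {r : ℝ | ∃ x : X, ‖x‖ = 1 ∧ 1 - (1 - t) < ‖G₁ x‖ ∧ r = ‖T x‖} :=
        ciInf_le hbelow ⟨1 - t, by linarith⟩
    _ ≤ sSup {r : ℝ | ∃ x : X, ‖x‖ = 1 ∧ 1 - δ' < ‖G₂ x‖ ∧ r = ‖T x‖} := by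
        apply csSup_le_csSup (hbdd G₂ δ') (hne G₁ hG₁ (1 - t) (by linarith))
        rintro r ⟨x, hx1, hx2, rfl⟩
        refine ⟨x, hx1, ?_, rfl⟩
        have : t ≤ ‖G₁ x‖ := by linarith
        have := hφ t ⟨ht0, ht1'.le⟩ x hx1 this
        linarith
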